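/- Let 0 ≤ α ≤ 1/2. For arbitrary signs ±, ±₁, ±₂, real numbers λ, μ, and nonzero η, ξ ∈ ℝⁿ, the angle satisfies ∠(±₁η, ±₂ξ) ≲ ⟨(λ+μ) ± |η+ξ|⟩^{1/2−α} / min(⟨η⟩,⟨ξ⟩)^{1/2−α} + (⟨λ ±₁ |η|⟩^{1/2} + ⟨μ ±₂ |ξ|⟩^{1/2}) / min(⟨η⟩,⟨ξ⟩)^{1/2}. -/

import Mathlib

open MeasureTheory Complex InnerProductGeometry
open scoped FourierTransform ENNReal RealInnerProductSpace

noncomputable section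

abbrev ES (n : ℕ) := EuclideanSpace ℝ (Fin n)

/-- spatial part of a spacetime frequency -/
def spart {n : ℕ} (z : ES (n+1)) : ES n := WithLp.toLp 2 (fun (i : Fin n) => z i.succ)

/-- inhomogeneous Sobolev norm via Fourier transform, ℝ≥0∞-valued -/
def sobolevNormE (n : ℕ) (s : ℝ) (f : ES n → ℂ) : ℝ≥0∞ :=
  (∫⁻ ξ : ES n, ENNReal.ofReal ((1 + ‖ξ‖^2) ^ s) * ((‖𝓕 f ξ‖₊ : ℝ≥0∞)) ^ 2) ^ (1/2 : ℝ)

/-- wave-Sobolev norm `H^{s,b}` on spacetime `ℝ^{1+n}` -/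
def waveNormE (n : ℕ) (s b : ℝ) (u : ES (n+1) → ℂ) : ℝ≥0∞ :=
  (∫⁻ z : ES (n+1), ENNReal.ofReal ((1 + ‖spart z‖^2) ^ s *
      (1 + (|z 0| - ‖spart z‖)^2) ^ b) * ((‖𝓕 u z‖₊ : ℝ≥0∞)) ^ 2) ^ (1/2 : ℝ)

/-- Fourier multiplier operator -/
def fmul {n : ℕ} (m : ES n → ℂ) (f : ES n → ℂ) : ES n → ℂ :=
  fun x => 𝓕⁻ (fun ξ => m ξ * 𝓕 f ξ) x

/-- partial derivative in the `k`-th coordinate direction -/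
def pdx {n : ℕ} {F : Type*} [NormedAddCommGroup F] [NormedSpace ℝ F]
    (k : Fin n) (f : ES n → F) (x : ES n) : F :=
  fderiv ℝ f x (EuclideanSpace.single k 1)

/-- japanese bracket of a real number -/
def jb (x : ℝ) : ℝ := Real.sqrt (1 + x^2)

/-- japanese bracket of a vector -/
def jbv {n : ℕ} (x : ES n) : ℝ := Real.sqrt (1 + ‖x‖^2)

/-!
Write `a = ±₁η`, `b = ±₂ξ` and `θ = ∠(a, b)`. The defect in the triangle inequality,
`|a| + |b| - |a + b|` or `|a - b| - ||a| - |b||` according to whether the signs agree, is at least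
`min(|a|, |b|) (1 - cos θ) / 2 ≳ min(|a|, |b|) θ²`, and it is bounded by
`|±|η + ξ| ∓₁ |η| ∓₂ |ξ||`, hence by `⟨(λ+μ) ± |η+ξ|⟩ + ⟨λ ±₁ |η|⟩ + ⟨μ ±₂ |ξ|⟩`.
Dividing by `min(⟨η⟩, ⟨ξ⟩) ≤ 1 + min(|η|, |ξ|)` and taking square roots gives the bound with
exponent `1/2` throughout; the exponent of the first term may be lowered to `1/2 - α` because
`θ ≤ π` takes care of the case where that quotient exceeds `1`.
-/

open Real

lemma one_le_jb (x : ℝ) : 1 ≤ jb x :=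
  Real.one_le_sqrt.2 (le_add_of_nonneg_right (sq_nonneg x))

lemma abs_le_jb (x : ℝ) : |x| ≤ jb x :=
  Real.abs_le_sqrt (le_add_of_nonneg_left zero_le_one)

lemma one_le_jbv {n : ℕ} (x : ES n) : 1 ≤ jbv x :=
  Real.one_le_sqrt.2 (le_add_of_nonneg_right (sq_nonneg _))

lemma jbv_le_one_add_norm {n : ℕ} (x : ES n) : jbv x ≤ 1 + ‖x‖ :=
  Real.sqrt_le_iff.2 ⟨by positivity, by nlinarith [norm_nonneg x]⟩

lemma min_mul_le_two_mul_of_mul_eq {r s t x y : ℝ} (hr : 0 ≤ r) (hs : 0 ≤ s) (ht : 0 ≤ t)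
    (hx : 0 ≤ x) (hy : y ≤ 2 * (r + s)) (hxy : x * y = 2 * (r * s) * t) :
    min r s * t ≤ 2 * x := by
  rcases (add_nonneg hr hs).eq_or_lt with hrs | hrs
  · obtain ⟨rfl, rfl⟩ : r = 0 ∧ s = 0 := ⟨by linarith, by linarith⟩
    simpa using hx
  have hmin : min r s * (r + s) ≤ 2 * (r * s) := by
    rcases min_cases r s with ⟨h, hle⟩ | ⟨h, hlt⟩ <;> rw [h] <;> nlinarith
  refine le_of_mul_le_mul_right ?_ hrs
  calc min r s * t * (r + s) = min r s * (r + s) * t := by ring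
    _ ≤ 2 * (r * s) * t := mul_le_mul_of_nonneg_right hmin ht
    _ = x * y := hxy.symm
    _ ≤ 2 * x * (r + s) := by nlinarith

section Angle

variable {V : Type*} [NormedAddCommGroup V] [InnerProductSpace ℝ V]

lemma min_norm_mul_one_sub_cos_angle_le_add (a b : V) :
    min ‖a‖ ‖b‖ * (1 - Real.cos (angle a b)) ≤ 2 * (‖a‖ + ‖b‖ - ‖a + b‖) := by
  have hcos := cos_angle_mul_norm_mul_norm a b
  have hsq := norm_add_sq_real a b
  refine min_mul_le_two_mul_of_mul_eq (norm_nonneg a) (norm_nonneg b)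
    (sub_nonneg.2 (Real.cos_le_one _)) (sub_nonneg.2 (norm_add_le a b))
    (y := ‖a‖ + ‖b‖ + ‖a + b‖) (by linarith [norm_add_le a b]) ?_
  linear_combination -hsq + 2 * hcos

lemma min_norm_mul_one_sub_cos_angle_le_sub (a b : V) :
    min ‖a‖ ‖b‖ * (1 - Real.cos (angle a b)) ≤ 2 * (‖a - b‖ - |‖a‖ - ‖b‖|) := by
  have hcos := cos_angle_mul_norm_mul_norm a b
  have hsq := norm_sub_sq_real a b
  have habs : |‖a‖ - ‖b‖| ≤ ‖a‖ + ‖b‖ :=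
    abs_sub_le_iff.2 ⟨by linarith [norm_nonneg b], by linarith [norm_nonneg a]⟩
  refine min_mul_le_two_mul_of_mul_eq (norm_nonneg a) (norm_nonneg b)
    (sub_nonneg.2 (Real.cos_le_one _)) (sub_nonneg.2 (abs_norm_sub_norm_le a b))
    (y := ‖a - b‖ + |‖a‖ - ‖b‖|) (by linarith [norm_sub_le a b, norm_nonneg b]) ?_
  linear_combination hsq + 2 * hcos - sq_abs (‖a‖ - ‖b‖)

lemma min_norm_mul_one_sub_cos_angle_smul_le {ε ε₁ ε₂ : ℝ} (hε : |ε| = 1)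
    (hε₁ : ε₁ = 1 ∨ ε₁ = -1) (hε₂ : ε₂ = 1 ∨ ε₂ = -1) (η ξ : V) :
    min ‖η‖ ‖ξ‖ * (1 - Real.cos (angle (ε₁ • η) (ε₂ • ξ))) ≤
      2 * |ε * ‖η + ξ‖ - ε₁ * ‖η‖ - ε₂ * ‖ξ‖| := by
  have hrs : |‖η‖ + ‖ξ‖| = ‖η‖ + ‖ξ‖ := abs_of_nonneg (by positivity)
  have hdefect : |(‖η + ξ‖ - |ε₁ * ‖η‖ + ε₂ * ‖ξ‖|)| ≤ |ε * ‖η + ξ‖ - ε₁ * ‖η‖ - ε₂ * ‖ξ‖| := by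
    simpa [abs_mul, hε, sub_sub] using
      abs_abs_sub_abs_le_abs_sub (ε * ‖η + ξ‖) (ε₁ * ‖η‖ + ε₂ * ‖ξ‖)
  suffices min ‖η‖ ‖ξ‖ * (1 - Real.cos (angle (ε₁ • η) (ε₂ • ξ))) ≤
      2 * |(‖η + ξ‖ - |ε₁ * ‖η‖ + ε₂ * ‖ξ‖|)| by linarith
  rcases hε₁ with rfl | rfl <;> rcases hε₂ with rfl | rfl <;>
    simp only [neg_smul, one_smul, neg_mul, one_mul]
  · have h := min_norm_mul_one_sub_cos_angle_le_add η ξ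
    rw [hrs]
    linarith [neg_le_abs (‖η + ξ‖ - (‖η‖ + ‖ξ‖))]
  · have h := min_norm_mul_one_sub_cos_angle_le_sub η (-ξ)
    rw [sub_neg_eq_add, norm_neg] at h
    rw [← sub_eq_add_neg]
    linarith [le_abs_self (‖η + ξ‖ - |‖η‖ - ‖ξ‖|)]
  · have h := min_norm_mul_one_sub_cos_angle_le_sub (-η) ξ
    rw [← neg_add', norm_neg, norm_neg] at h
    rw [neg_add_eq_sub, abs_sub_comm ‖ξ‖]
    linarith [le_abs_self (‖η + ξ‖ - |‖η‖ - ‖ξ‖|)]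
  · have h := min_norm_mul_one_sub_cos_angle_le_add η ξ
    rw [angle_neg_neg, ← neg_add, abs_neg, hrs]
    linarith [neg_le_abs (‖η + ξ‖ - (‖η‖ + ‖ξ‖))]

lemma sq_angle_le_mul_one_sub_cos (a b : V) :
    angle a b ^ 2 ≤ π ^ 2 / 2 * (1 - Real.cos (angle a b)) := by
  have hjordan := Real.cos_le_one_sub_mul_cos_sq
    (abs_le.2 ⟨by linarith [angle_nonneg a b, pi_pos], angle_le_pi a b⟩)
  calc angle a b ^ 2 = π ^ 2 / 2 * (2 / π ^ 2 * angle a b ^ 2) := by field_simp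
    _ ≤ π ^ 2 / 2 * (1 - Real.cos (angle a b)) := by gcongr; linarith

end Angle

lemma min_jbv_le_one_add_min_norm {n : ℕ} (η ξ : ES n) :
    min (jbv η) (jbv ξ) ≤ 1 + min ‖η‖ ‖ξ‖ := by
  rw [← min_add_add_left]
  exact min_le_min (jbv_le_one_add_norm η) (jbv_le_one_add_norm ξ)

lemma sq_angle_smul_mul_min_jbv_le {n : ℕ} {ε ε₁ ε₂ : ℝ} (hε : |ε| = 1)
    (hε₁ : ε₁ = 1 ∨ ε₁ = -1) (hε₂ : ε₂ = 1 ∨ ε₂ = -1) (lam mu : ℝ) (η ξ : ES n) :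
    angle (ε₁ • η) (ε₂ • ξ) ^ 2 * min (jbv η) (jbv ξ) ≤
      (2 * π) ^ 2 * (jb (lam + mu + ε * ‖η + ξ‖) + jb (lam + ε₁ * ‖η‖) + jb (mu + ε₂ * ‖ξ‖)) := by
  set θ := angle (ε₁ • η) (ε₂ • ξ)
  set S := jb (lam + mu + ε * ‖η + ξ‖) + jb (lam + ε₁ * ‖η‖) + jb (mu + ε₂ * ‖ξ‖)
  have hS : |ε * ‖η + ξ‖ - ε₁ * ‖η‖ - ε₂ * ‖ξ‖| ≤ S := by
    calc |ε * ‖η + ξ‖ - ε₁ * ‖η‖ - ε₂ * ‖ξ‖|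
        = |(lam + mu + ε * ‖η + ξ‖) - (lam + ε₁ * ‖η‖) - (mu + ε₂ * ‖ξ‖)| := by ring_nf
      _ ≤ |(lam + mu + ε * ‖η + ξ‖) - (lam + ε₁ * ‖η‖)| + |mu + ε₂ * ‖ξ‖| := abs_sub _ _
      _ ≤ |lam + mu + ε * ‖η + ξ‖| + |lam + ε₁ * ‖η‖| + |mu + ε₂ * ‖ξ‖| := by
        gcongr; exact abs_sub _ _
      _ ≤ S := by simp only [S]; gcongr <;> exact abs_le_jb _
  have hS₁ : 1 ≤ S := by
    simp only [S]
    linarith [one_le_jb (lam + mu + ε * ‖η + ξ‖), one_le_jb (lam + ε₁ * ‖η‖),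
      one_le_jb (mu + ε₂ * ‖ξ‖)]
  have hθ₀ : 0 ≤ θ := angle_nonneg _ _
  have hθπ : θ ^ 2 ≤ π ^ 2 * S := by
    nlinarith [angle_le_pi (ε₁ • η) (ε₂ • ξ), pi_pos]
  have hθm : θ ^ 2 * min ‖η‖ ‖ξ‖ ≤ π ^ 2 * S := by
    have hcos := min_norm_mul_one_sub_cos_angle_smul_le hε hε₁ hε₂ η ξ
    have hm : 0 ≤ min ‖η‖ ‖ξ‖ := le_min (norm_nonneg η) (norm_nonneg ξ)
    calc θ ^ 2 * min ‖η‖ ‖ξ‖ ≤ π ^ 2 / 2 * (1 - Real.cos θ) * min ‖η‖ ‖ξ‖ :=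
          mul_le_mul_of_nonneg_right (sq_angle_le_mul_one_sub_cos _ _) hm
      _ = π ^ 2 / 2 * (min ‖η‖ ‖ξ‖ * (1 - Real.cos θ)) := by ring
      _ ≤ π ^ 2 / 2 * (2 * S) :=
        mul_le_mul_of_nonneg_left (by linarith) (by positivity)
      _ = π ^ 2 * S := by ring
  calc θ ^ 2 * min (jbv η) (jbv ξ) ≤ θ ^ 2 * (1 + min ‖η‖ ‖ξ‖) := by
        gcongr; exact min_jbv_le_one_add_min_norm η ξ
    _ ≤ (2 * π) ^ 2 * S := by nlinarith [pi_pos]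

lemma le_mul_rpow_add_sqrt_add_sqrt {θ c x y z p : ℝ} (hθ : 0 ≤ θ) (hθc : θ ≤ c)
    (hsq : θ ^ 2 ≤ c ^ 2 * (x + y + z)) (hx : 0 ≤ x) (hy : 0 ≤ y) (hz : 0 ≤ z)
    (hp₀ : 0 ≤ p) (hp : p ≤ 1 / 2) :
    θ ≤ c * (x ^ p + √y + √z) := by
  have hc : 0 ≤ c := hθ.trans hθc
  have hsqrt : θ ≤ c * (√x + √y + √z) := by
    refine (pow_le_pow_iff_left₀ hθ (by positivity) two_ne_zero).1 (hsq.trans ?_)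
    have hxyz : x + y + z ≤ (√x + √y + √z) ^ 2 := by
      nlinarith [sq_sqrt hx, sq_sqrt hy, sq_sqrt hz, sqrt_nonneg x, sqrt_nonneg y, sqrt_nonneg z]
    calc c ^ 2 * (x + y + z) ≤ c ^ 2 * (√x + √y + √z) ^ 2 := by gcongr
      _ = (c * (√x + √y + √z)) ^ 2 := by ring
  rcases le_or_gt x 1 with hx₁ | hx₁
  · have : √x ≤ x ^ p := by
      rw [sqrt_eq_rpow]
      exact rpow_le_rpow_of_exponent_ge' hx hx₁ hp₀ hp
    nlinarith
  · nlinarith [one_le_rpow hx₁.le hp₀, sqrt_nonneg y, sqrt_nonneg z]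

/-- Angle estimate (Lemma 2.1, estimate (angle1)): for `0 ≤ α ≤ 1/2`, arbitrary signs,
`λ, μ ∈ ℝ` and nonzero `η, ξ ∈ ℝⁿ`,
`∠(±₁η, ±₂ξ) ≲ ⟨(λ+μ) ± |η+ξ|⟩^{1/2−α}/min(⟨η⟩,⟨ξ⟩)^{1/2−α}
  + (⟨λ ±₁ |η|⟩^{1/2} + ⟨μ ±₂ |ξ|⟩^{1/2})/min(⟨η⟩,⟨ξ⟩)^{1/2}`. -/
theorem angle_estimate_one :
    ∃ C : ℝ, 0 < C ∧ ∀ (n : ℕ) (α : ℝ), 0 ≤ α → α ≤ 1/2 →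
      ∀ ε ε₁ ε₂ : ℝ, (ε = 1 ∨ ε = -1) → (ε₁ = 1 ∨ ε₁ = -1) → (ε₂ = 1 ∨ ε₂ = -1) →
      ∀ (lam mu : ℝ) (η ξ : ES n), η ≠ 0 → ξ ≠ 0 →
        angle (ε₁ • η) (ε₂ • ξ) ≤
          C * (jb ((lam + mu) + ε * ‖η + ξ‖) ^ ((1:ℝ)/2 - α) /
                 (min (jbv η) (jbv ξ)) ^ ((1:ℝ)/2 - α) +
               (jb (lam + ε₁ * ‖η‖) ^ ((1:ℝ)/2) + jb (mu + ε₂ * ‖ξ‖) ^ ((1:ℝ)/2)) /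
                 (min (jbv η) (jbv ξ)) ^ ((1:ℝ)/2)) := by
  refine ⟨2 * π, by positivity, ?_⟩
  intro n α hα₀ hα ε ε₁ ε₂ hε hε₁ hε₂ lam mu η ξ _ _
  set A := jb (lam + mu + ε * ‖η + ξ‖)
  set B₁ := jb (lam + ε₁ * ‖η‖)
  set B₂ := jb (mu + ε₂ * ‖ξ‖)
  set M := min (jbv η) (jbv ξ)
  have hA : 0 ≤ A := zero_le_one.trans (one_le_jb _)
  have hB₁ : 0 ≤ B₁ := zero_le_one.trans (one_le_jb _)
  have hB₂ : 0 ≤ B₂ := zero_le_one.trans (one_le_jb _)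
  have hM : 0 < M := zero_lt_one.trans_le (le_min (one_le_jbv η) (one_le_jbv ξ))
  have hsq : angle (ε₁ • η) (ε₂ • ξ) ^ 2 ≤ (2 * π) ^ 2 * (A / M + B₁ / M + B₂ / M) := by
    rw [← add_div, ← add_div, mul_div_assoc', le_div_iff₀ hM]
    have hε' : |ε| = 1 := by rcases hε with rfl | rfl <;> norm_num
    exact sq_angle_smul_mul_min_jbv_le hε' hε₁ hε₂ lam mu η ξ
  have key := le_mul_rpow_add_sqrt_add_sqrt (angle_nonneg _ _)
    ((angle_le_pi _ _).trans (by linarith [pi_pos])) hsq (div_nonneg hA hM.le)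
    (div_nonneg hB₁ hM.le) (div_nonneg hB₂ hM.le) (sub_nonneg.2 hα) (by linarith)
  rwa [div_rpow hA hM.le, sqrt_eq_rpow, sqrt_eq_rpow, div_rpow hB₁ hM.le, div_rpow hB₂ hM.le,
    add_assoc, ← add_div] at key
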